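/- Let L be a complex Lie algebra admitting a basis realizing the bracket pattern d₅(1,1,1), and let L′ be a complex Lie algebra admitting a basis f₁,…,f₅ whose only nonzero brackets among basis vectors (up to antisymmetry) are [f₃,f₄]=f₂, [f₁,f₅]=f₂, [f₂,f₅]=f₂, [f₃,f₅]=f₁+f₃+f₄ (the pattern d₁₄(0:1)). Then L and L′ are isomorphic as Lie algebras over ℂ. -/

import Mathlib

/-- `Realizes L c` means that the complex Lie algebra `L` admits a basis `e₁, …, e₅`
(indexed by `Fin 5`) in which the brackets of basis vectors are given by the
structure constants `c`, i.e. `⁅eᵢ, eⱼ⁆ = ∑ₖ c i j k • eₖ` for all `i < j`,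
all brackets of basis vectors being determined by these via antisymmetry. -/
def Realizes (L : Type) [LieRing L] [LieAlgebra ℂ L]
    (c : Fin 5 → Fin 5 → Fin 5 → ℂ) : Prop :=
  ∃ e : Module.Basis (Fin 5) ℂ L, ∀ i j : Fin 5, i < j →
    ⁅e i, e j⁆ = ∑ k, c i j k • e k

/-- The bracket pattern `d₅(p,q,r)` (indices shifted down by one so the basis is indexed by `Fin 5`): `[e₂,e₄]=e₁+p·e₂`, `[e₃,e₄]=e₂+q·e₃`, `[e₁,e₅]=p(q−r)·e₁`, `[e₂,e₅]=(r−q)·e₁`, `[e₃,e₅]=e₁+r·e₂−r(p−q)·e₃`, all other brackets zero. -/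
def d5 (p q r : ℂ) : Fin 5 → Fin 5 → Fin 5 → ℂ := fun i j =>
  if i = 1 ∧ j = 3 then ![1, p, 0, 0, 0]
  else if i = 2 ∧ j = 3 then ![0, 1, q, 0, 0]
  else if i = 0 ∧ j = 4 then ![p * (q - r), 0, 0, 0, 0]
  else if i = 1 ∧ j = 4 then ![r - q, 0, 0, 0, 0]
  else if i = 2 ∧ j = 4 then ![1, r, -(r * (p - q)), 0, 0]
  else 0

/-- The pattern `d₁₄(0:1)`: `[f₃,f₄]=f₂`, `[f₁,f₅]=f₂`, `[f₂,f₅]=f₂`, `[f₃,f₅]=f₁+f₃+f₄`. -/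
def patternD14 : Fin 5 → Fin 5 → Fin 5 → ℂ := fun i j =>
  if i = 2 ∧ j = 3 then ![0, 1, 0, 0, 0]
  else if i = 0 ∧ j = 4 then ![0, 1, 0, 0, 0]
  else if i = 1 ∧ j = 4 then ![0, 1, 0, 0, 0]
  else if i = 2 ∧ j = 4 then ![1, 0, 1, 1, 0]
  else 0

/-!
The substitution `e₁ ↦ f₂ - f₁, e₂ ↦ f₁, e₃ ↦ f₃ + f₄, e₄ ↦ f₅, e₅ ↦ f₄` turns a basis realizing
`d₁₄(0:1)` into a basis realizing `d₅(1,1,1)`, and two bases with the same structure constants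
give an isomorphism of Lie algebras.
-/

open Module Submodule

section StructureConstants

variable {R ι L L' : Type*} [CommRing R] [LieRing L] [LieAlgebra R L] [LieRing L']
  [LieAlgebra R L'] [Fintype ι]

theorem Module.Basis.lie_eq_ite [LinearOrder ι] {e : Basis ι R L} {c : ι → ι → ι → R}
    (he : ∀ i j, i < j → ⁅e i, e j⁆ = ∑ k, c i j k • e k) (i j : ι) :
    ⁅e i, e j⁆ =
      if i < j then ∑ k, c i j k • e k else if j < i then -∑ k, c j i k • e k else 0 := by
  rcases lt_trichotomy i j with hij | rfl | hij
  · simp [hij, he i j hij]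
  · simp
  · simp [hij, hij.not_gt, ← he j i hij]

theorem LinearMap.map_lie_of_basis (φ : L →ₗ[R] L') (e : Basis ι R L)
    (h : ∀ i j, φ ⁅e i, e j⁆ = ⁅φ (e i), φ (e j)⁆) (x y : L) :
    φ ⁅x, y⁆ = ⁅φ x, φ y⁆ := by
  rw [← e.sum_repr x, ← e.sum_repr y]
  simp only [sum_lie, lie_sum, smul_lie, lie_smul, map_sum, map_smul, h]

noncomputable def Module.Basis.lieEquivOfStructureConstants [LinearOrder ι] (e : Basis ι R L)
    (e' : Basis ι R L') (c : ι → ι → ι → R) (he : ∀ i j, i < j → ⁅e i, e j⁆ = ∑ k, c i j k • e k)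
    (he' : ∀ i j, i < j → ⁅e' i, e' j⁆ = ∑ k, c i j k • e' k) : L ≃ₗ⁅R⁆ L' :=
  { e.equiv e' (Equiv.refl ι) with
    map_lie' := fun {x y} => by
      refine LinearMap.map_lie_of_basis (e.equiv e' (Equiv.refl ι)).toLinearMap e ?_ x y
      intro i j
      simp only [LinearEquiv.coe_coe, e.equiv_apply, Equiv.refl_apply, e.lie_eq_ite he,
        e'.lie_eq_ite he']
      split_ifs <;> simp [map_sum, e.equiv_apply] }

end StructureConstants

theorem Module.Basis.exists_basis_coe_eq_of_mem_span {K V ι : Type*} [Field K] [AddCommGroup V]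
    [Module K V] [Fintype ι] (f : Basis ι K V) (g : ι → V)
    (hg : ∀ i, f i ∈ span K (Set.range g)) : ∃ b : Basis ι K V, ⇑b = g := by
  have hspan : ⊤ ≤ span K (Set.range g) := by
    rw [← f.span_eq, span_le]
    exact Set.range_subset_iff.mpr hg
  exact ⟨basisOfTopLeSpanOfCardEqFinrank g hspan (finrank_eq_card_basis f).symm,
    coe_basisOfTopLeSpanOfCardEqFinrank _ _ _⟩

theorem Realizes.nonempty_lieEquiv {L L' : Type} [LieRing L] [LieAlgebra ℂ L] [LieRing L']
    [LieAlgebra ℂ L'] {c : Fin 5 → Fin 5 → Fin 5 → ℂ} (hL : Realizes L c) (hL' : Realizes L' c) :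
    Nonempty (L ≃ₗ⁅ℂ⁆ L') :=
  let ⟨e, he⟩ := hL
  let ⟨e', he'⟩ := hL'
  ⟨e.lieEquivOfStructureConstants e' c he he'⟩

theorem Realizes.d5_one_one_one_of_patternD14 {L : Type} [LieRing L] [LieAlgebra ℂ L]
    (hL : Realizes L patternD14) : Realizes L (d5 1 1 1) := by
  obtain ⟨f, hf⟩ := hL
  set g : Fin 5 → L := ![f 1 - f 0, f 0, f 2 + f 3, f 4, f 3]
  obtain ⟨b, hb⟩ : ∃ b : Basis (Fin 5) ℂ L, ⇑b = g := by
    refine f.exists_basis_coe_eq_of_mem_span g fun i => ?_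
    rw [mem_span_range_iff_exists_fun]
    fin_cases i
    · exact ⟨![0, 1, 0, 0, 0], by simp [g, Fin.sum_univ_five]⟩
    · exact ⟨![1, 1, 0, 0, 0], by simp [g, Fin.sum_univ_five]⟩
    · exact ⟨![0, 0, 1, 0, -1], by simp [g, Fin.sum_univ_five]⟩
    · exact ⟨![0, 0, 0, 0, 1], by simp [g, Fin.sum_univ_five]⟩
    · exact ⟨![0, 0, 0, 1, 0], by simp [g, Fin.sum_univ_five]⟩
  refine ⟨b, fun i j hij => ?_⟩
  rw [hb]
  fin_cases i <;> fin_cases j <;> (try exact absurd hij (by decide)) <;>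
    simp [g, d5, patternD14, Fin.sum_univ_five, lie_add, add_lie, sub_lie, add_assoc,
      f.lie_eq_ite hf]

/-- A Lie algebra realizing `d₅(1,1,1)` is isomorphic to one realizing the
pattern `d₁₄(0:1)`. -/
theorem d5_111_iso_d14_01
    (L L' : Type) [LieRing L] [LieAlgebra ℂ L] [LieRing L'] [LieAlgebra ℂ L']
    (hL : Realizes L (d5 1 1 1)) (hL' : Realizes L' patternD14) :
    Nonempty (L ≃ₗ⁅ℂ⁆ L') :=
  hL.nonempty_lieEquiv hL'.d5_one_one_one_of_patternD14
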